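/- Let μ be a probability measure on ℝ^d with finite second moment, and let X_β[μ](x) = F_{β,μ}(x) − x be the Gaussian-attention drift with kernel G_β. Then ∫ |X_β[μ](x)|² μ(dx) ≤ 2 ∫ |x|² μ(dx). -/

import Mathlib

/-! For fixed `x`, normalising the Gaussian weights turns `μ` into the tilted probability measure
`π_x = μ.tilted (fun y => -β * ‖y - x‖ ^ 2 / 2)`, and `X_β[μ](x)` is the `π_x`-mean of `y - x`.
Jensen gives `‖X_β[μ](x)‖² ≤ ∫ ‖y - x‖² dπ_x`. The tilt is a decreasing function of `‖y - x‖²`,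
so by Chebyshev's correlation inequality this is at most `∫ ‖y - x‖² dμ`. Integrating in `x`
gives `2 ∫ ‖x‖² dμ - 2 ‖∫ x dμ‖²`. -/

open MeasureTheory Real

noncomputable section

def Gkernel (d : ℕ) (β : ℝ) (z : EuclideanSpace ℝ (Fin d)) : ℝ :=
  (β / (2 * π)) ^ ((d : ℝ) / 2) * Real.exp (-β * ‖z‖ ^ 2 / 2)

def Gconv (d : ℕ) (β : ℝ) (μ : Measure (EuclideanSpace ℝ (Fin d)))
    (x : EuclideanSpace ℝ (Fin d)) : ℝ :=
  ∫ y, Gkernel d β (x - y) ∂μ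

def Gbarycenter (d : ℕ) (β : ℝ) (μ : Measure (EuclideanSpace ℝ (Fin d)))
    (x : EuclideanSpace ℝ (Fin d)) : EuclideanSpace ℝ (Fin d) :=
  (Gconv d β μ x)⁻¹ • ∫ y, Gkernel d β (x - y) • y ∂μ

def Gdrift (d : ℕ) (β : ℝ) (μ : Measure (EuclideanSpace ℝ (Fin d)))
    (x : EuclideanSpace ℝ (Fin d)) : EuclideanSpace ℝ (Fin d) :=
  Gbarycenter d β μ x - x

open scoped RealInnerProductSpace

section

variable {α : Type*} [MeasurableSpace α] {μ : Measure α}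

theorem sq_norm_integral_le_integral_sq_norm {E : Type*} [NormedAddCommGroup E]
    [InnerProductSpace ℝ E] [CompleteSpace E] [IsProbabilityMeasure μ] {f : α → E}
    (hf : Integrable f μ) (hf2 : Integrable (fun a => ‖f a‖ ^ 2) μ) :
    ‖∫ a, f a ∂μ‖ ^ 2 ≤ ∫ a, ‖f a‖ ^ 2 ∂μ :=
  (convexOn_univ_norm.pow (fun _ _ => norm_nonneg _) 2).map_integral_le
    (continuous_norm.pow 2).continuousOn isClosed_univ (ae_of_all _ fun _ => Set.mem_univ _)
    hf hf2

theorem integral_comp_mul_le_of_antitone [IsProbabilityMeasure μ] {r : α → ℝ} {φ : ℝ → ℝ}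
    (hφ : Antitone φ) (hr : Integrable r μ) (hφr : Integrable (fun a => φ (r a)) μ)
    (hφrr : Integrable (fun a => φ (r a) * r a) μ) :
    ∫ a, φ (r a) * r a ∂μ ≤ (∫ a, φ (r a) ∂μ) * ∫ a, r a ∂μ := by
  set m := ∫ a, r a ∂μ
  -- Compare `r` with its mean rather than with an independent copy: `φ m * (r a - m)` then
  -- integrates to zero, so no product measure is needed.
  have hsign : ∀ a, (r a - m) * (φ (r a) - φ m) ≤ 0 := fun a => by
    rcases le_total (r a) m with h | h
    · exact mul_nonpos_of_nonpos_of_nonneg (sub_nonpos.2 h) (sub_nonneg.2 (hφ h))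
    · exact mul_nonpos_of_nonneg_of_nonpos (sub_nonneg.2 h) (sub_nonpos.2 (hφ h))
  have hexpand : ∫ a, (r a - m) * (φ (r a) - φ m) ∂μ
      = ∫ a, φ (r a) * r a ∂μ - (∫ a, φ (r a) ∂μ) * m := by
    have hpoint : ∀ a, (r a - m) * (φ (r a) - φ m)
        = (φ (r a) * r a - φ (r a) * m) - φ m * (r a - m) := fun a => by ring
    simp_rw [hpoint]
    rw [integral_sub (hφrr.sub' (hφr.mul_const m)) ((hr.sub' (integrable_const m)).const_mul _),
      integral_sub hφrr (hφr.mul_const m), integral_mul_const, integral_const_mul,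
      integral_sub hr (integrable_const m)]
    simp [m]
  linarith [integral_nonpos (μ := μ) hsign]

theorem integral_tilted_le_of_antitone [IsProbabilityMeasure μ] {r : α → ℝ} {ψ : ℝ → ℝ}
    (hψ : Antitone ψ) (hr : Integrable r μ) (hexp : Integrable (fun a => exp (ψ (r a))) μ)
    (hexpr : Integrable (fun a => exp (ψ (r a)) * r a) μ) :
    ∫ a, r a ∂μ.tilted (fun a => ψ (r a)) ≤ ∫ a, r a ∂μ := by
  set Z := ∫ a, exp (ψ (r a)) ∂μ
  have hZ : 0 < Z := integral_exp_pos hexp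
  have hφ : Antitone fun t => exp (ψ t) / Z := fun s t hst =>
    div_le_div_of_nonneg_right (exp_le_exp.2 (hψ hst)) hZ.le
  calc ∫ a, r a ∂μ.tilted (fun a => ψ (r a))
      = ∫ a, exp (ψ (r a)) / Z * r a ∂μ := integral_tilted _ _
    _ ≤ (∫ a, exp (ψ (r a)) / Z ∂μ) * ∫ a, r a ∂μ :=
        integral_comp_mul_le_of_antitone hφ hr (hexp.div_const Z)
          (by simpa only [div_mul_eq_mul_div] using hexpr.div_const Z)
    _ = ∫ a, r a ∂μ := by rw [integral_div, div_self hZ.ne', one_mul]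

end

section

variable {α : Type*} [MeasurableSpace α] {μ : Measure α} [IsFiniteMeasure μ]
  {f : α → ℝ}

theorem integrable_exp_of_nonpos (hf : AEMeasurable f μ) (hf0 : ∀ a, f a ≤ 0) :
    Integrable (fun a => exp (f a)) μ :=
  (integrable_const 1).mono' (measurable_exp.comp_aemeasurable hf).aestronglyMeasurable
    (ae_of_all _ fun a => by simpa [abs_of_pos (exp_pos _)] using hf0 a)

theorem MeasureTheory.Integrable.tilted_of_nonpos {E : Type*} [NormedAddCommGroup E]
    [NormedSpace ℝ E] {g : α → E} (hg : Integrable g μ) (hf : AEMeasurable f μ)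
    (hf0 : ∀ a, f a ≤ 0) :
    Integrable g (μ.tilted f) :=
  (integrable_tilted_iff (integrable_exp_of_nonpos hf hf0) g).2 <|
    hg.bdd_smul 1 (measurable_exp.comp_aemeasurable hf).aestronglyMeasurable
      (ae_of_all _ fun a => by simpa [abs_of_pos (exp_pos _)] using hf0 a)

end

section

variable {E : Type*} [NormedAddCommGroup E] [InnerProductSpace ℝ E]
  [MeasurableSpace E] [BorelSpace E] [SecondCountableTopology E]
  {μ : Measure E} [IsProbabilityMeasure μ]

omit [InnerProductSpace ℝ E] [IsProbabilityMeasure μ] in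
theorem memLp_two_id_of_integrable_sq_norm (hμ : Integrable (fun x => ‖x‖ ^ 2) μ) :
    MemLp (fun x => x) 2 μ :=
  (memLp_two_iff_integrable_sq_norm aestronglyMeasurable_id).2 hμ

omit [InnerProductSpace ℝ E] in
theorem integrable_norm_sub_sq (hμ : Integrable (fun x => ‖x‖ ^ 2) μ) (x : E) :
    Integrable (fun y => ‖y - x‖ ^ 2) μ :=
  ((memLp_two_id_of_integrable_sq_norm hμ).sub (memLp_const x)).integrable_norm_pow two_ne_zero

variable [CompleteSpace E]

theorem integral_norm_sub_sq (hμ : Integrable (fun x => ‖x‖ ^ 2) μ) (x : E) :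
    ∫ y, ‖y - x‖ ^ 2 ∂μ = ∫ y, ‖y‖ ^ 2 ∂μ - 2 * ⟪∫ y, y ∂μ, x⟫ + ‖x‖ ^ 2 := by
  have hid := (memLp_two_id_of_integrable_sq_norm hμ).integrable one_le_two
  have hexpand : ∀ y, ‖y - x‖ ^ 2 = ‖y‖ ^ 2 - 2 * ⟪x, y⟫ + ‖x‖ ^ 2 := fun y => by
    rw [norm_sub_sq_real, real_inner_comm]
  simp_rw [hexpand]
  rw [integral_add (hμ.sub' ((hid.const_inner x).const_mul 2)) (integrable_const _),
    integral_sub hμ ((hid.const_inner x).const_mul 2), integral_const_mul, integral_inner hid,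
    real_inner_comm]
  simp

theorem integrable_integral_norm_sub_sq (hμ : Integrable (fun x => ‖x‖ ^ 2) μ) :
    Integrable (fun x => ∫ y, ‖y - x‖ ^ 2 ∂μ) μ := by
  have hid := (memLp_two_id_of_integrable_sq_norm hμ).integrable one_le_two
  simp_rw [integral_norm_sub_sq hμ]
  exact ((integrable_const _).sub' ((hid.const_inner _).const_mul 2)).fun_add hμ

theorem integral_integral_norm_sub_sq (hμ : Integrable (fun x => ‖x‖ ^ 2) μ) :
    ∫ x, ∫ y, ‖y - x‖ ^ 2 ∂μ ∂μ = 2 * ∫ x, ‖x‖ ^ 2 ∂μ - 2 * ‖∫ x, x ∂μ‖ ^ 2 := by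
  have hid := (memLp_two_id_of_integrable_sq_norm hμ).integrable one_le_two
  simp_rw [integral_norm_sub_sq hμ]
  rw [integral_add ((integrable_const _).sub' ((hid.const_inner _).const_mul 2)) hμ,
    integral_sub (integrable_const _) ((hid.const_inner _).const_mul 2), integral_const_mul,
    integral_inner hid, real_inner_self_eq_norm_sq]
  simp only [integral_const, probReal_univ, smul_eq_mul, one_mul]
  ring

end

section

variable {d : ℕ} {β : ℝ} {μ : Measure (EuclideanSpace ℝ (Fin d))}

theorem Gbarycenter_eq_integral_tilted (hβ : 0 < β) (x : EuclideanSpace ℝ (Fin d)) :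
    Gbarycenter d β μ x = ∫ y, y ∂μ.tilted (fun y => -β * ‖y - x‖ ^ 2 / 2) := by
  set c : ℝ := (β / (2 * π)) ^ ((d : ℝ) / 2)
  have hc : c ≠ 0 := (rpow_pos_of_pos (by positivity) _).ne'
  have hkernel : ∀ y, Gkernel d β (x - y) = c * exp (-β * ‖y - x‖ ^ 2 / 2) := fun y => by
    rw [Gkernel, norm_sub_rev]
  simp_rw [Gbarycenter, Gconv, integral_tilted, hkernel, div_eq_inv_mul (exp _), mul_smul,
    integral_smul, integral_const_mul, smul_smul, mul_inv_rev, mul_assoc, inv_mul_cancel₀ hc,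
    mul_one]

theorem sq_norm_Gdrift_le (hβ : 0 < β) [IsProbabilityMeasure μ]
    (hμ : Integrable (fun x => ‖x‖ ^ 2) μ) (x : EuclideanSpace ℝ (Fin d)) :
    ‖Gdrift d β μ x‖ ^ 2 ≤ ∫ y, ‖y - x‖ ^ 2 ∂μ := by
  set ψ : ℝ → ℝ := fun t => -β * t / 2
  have hψ : Antitone ψ := fun s t hst => by simp only [ψ]; nlinarith
  have hψ0 : ∀ y : EuclideanSpace ℝ (Fin d), ψ (‖y - x‖ ^ 2) ≤ 0 := fun y => by
    simp only [ψ]; nlinarith [sq_nonneg ‖y - x‖]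
  have hmeas : AEMeasurable (fun y => ψ (‖y - x‖ ^ 2)) μ := by fun_prop
  have hexp := integrable_exp_of_nonpos hmeas hψ0
  have := isProbabilityMeasure_tilted hexp
  have hr := integrable_norm_sub_sq hμ x
  have hid := (memLp_two_id_of_integrable_sq_norm hμ).integrable one_le_two
  calc ‖Gdrift d β μ x‖ ^ 2
      = ‖∫ y, (y - x) ∂μ.tilted fun y => ψ (‖y - x‖ ^ 2)‖ ^ 2 := by
        rw [Gdrift, Gbarycenter_eq_integral_tilted hβ,
          integral_sub (hid.tilted_of_nonpos hmeas hψ0) (integrable_const x), integral_const,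
          probReal_univ, one_smul]
    _ ≤ ∫ y, ‖y - x‖ ^ 2 ∂μ.tilted fun y => ψ (‖y - x‖ ^ 2) :=
        sq_norm_integral_le_integral_sq_norm
          ((hid.tilted_of_nonpos hmeas hψ0).sub (integrable_const x))
          (hr.tilted_of_nonpos hmeas hψ0)
    _ ≤ ∫ y, ‖y - x‖ ^ 2 ∂μ :=
        integral_tilted_le_of_antitone hψ hr hexp
          ((integrable_tilted_iff hexp _).1 (hr.tilted_of_nonpos hmeas hψ0))

end

theorem barycentric_action_estimate {d : ℕ} (β : ℝ) (hβ : 0 < β)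
    (μ : Measure (EuclideanSpace ℝ (Fin d))) [IsProbabilityMeasure μ]
    (hmom : Integrable (fun x => ‖x‖ ^ 2) μ) :
    ∫ x, ‖Gdrift d β μ x‖ ^ 2 ∂μ ≤ 2 * ∫ x, ‖x‖ ^ 2 ∂μ :=
  calc ∫ x, ‖Gdrift d β μ x‖ ^ 2 ∂μ ≤ ∫ x, ∫ y, ‖y - x‖ ^ 2 ∂μ ∂μ :=
        integral_mono_of_nonneg (ae_of_all _ fun _ => sq_nonneg _)
          (integrable_integral_norm_sub_sq hmom) (ae_of_all _ (sq_norm_Gdrift_le hβ hmom))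
    _ = 2 * ∫ x, ‖x‖ ^ 2 ∂μ - 2 * ‖∫ x, x ∂μ‖ ^ 2 := integral_integral_norm_sub_sq hmom
    _ ≤ 2 * ∫ x, ‖x‖ ^ 2 ∂μ := by linarith [sq_nonneg ‖∫ x, x ∂μ‖]

end
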